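/- Let G be the join of a complete graph on t vertices with an independent set of size m, where m ≥ t + 2. Then G contains a path on 2t + 1 vertices, but G contains no path on 2t + 2 vertices. -/

import Mathlib

open SimpleGraph

/-- `H` is contained in `G` as a subgraph: there is an injective map preserving adjacency. -/
def Contains {α β : Type*} (G : SimpleGraph α) (H : SimpleGraph β) : Prop :=
  ∃ f : β ↪ α, ∀ a b, H.Adj a b → G.Adj (f a) (f b)

/-- The join of two graphs: all cross edges are added. -/
def graphJoin {α β : Type*} (G : SimpleGraph α) (H : SimpleGraph β) : SimpleGraph (α ⊕ β) where
  Adj x y :=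
    match x, y with
    | Sum.inl a, Sum.inl b => G.Adj a b
    | Sum.inl _, Sum.inr _ => True
    | Sum.inr _, Sum.inl _ => True
    | Sum.inr a, Sum.inr b => H.Adj a b
  symm := by
    constructor
    rintro (a|a) (b|b) h
    · exact G.adj_symm h
    · trivial
    · trivial
    · exact H.adj_symm h
  loopless := by
    constructor
    rintro (a|a) h
    · exact G.irrefl h
    · exact H.irrefl h

/-- The join of a clique on `t` vertices with an independent set of `m` vertices. -/
def cliqueIndepJoin (t m : ℕ) : SimpleGraph (Fin t ⊕ Fin m) :=
  graphJoin (completeGraph (Fin t)) (⊥ : SimpleGraph (Fin m))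

/-!
No edge of the join lies inside the independent side `A`, so the `t + 1`
disjoint edges `{2i, 2i+1}` of a path on `2t + 2` vertices each need an endpoint in the clique
`W`, which has only `t` vertices. Conversely, the path `a₀ w₀ a₁ w₁ … w_{t-1} a_t` alternating
between `A` and `W` has `2t + 1` vertices.
-/

section graphJoin

variable {α β : Type*} (G : SimpleGraph α) (H : SimpleGraph β)

theorem graphJoin_adj_of_isLeft_ne {x y : α ⊕ β} (h : x.isLeft ≠ y.isLeft) :
    (graphJoin G H).Adj x y := by
  rcases x with a | a <;> rcases y with b | b <;> trivial

theorem isLeft_or_isLeft_of_graphJoin_bot_adj {x y : α ⊕ β}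
    (h : (graphJoin G (⊥ : SimpleGraph β)).Adj x y) : x.isLeft ∨ y.isLeft := by
  rcases x with a | a <;> rcases y with b | b <;> simp_all [graphJoin]

def alternatingPath {t : ℕ} (e₁ : Fin t → α) (e₂ : Fin (t + 1) → β) (i : Fin (2 * t + 1)) :
    α ⊕ β :=
  if h : i.val % 2 = 1 then .inl (e₁ ⟨i / 2, by omega⟩) else .inr (e₂ ⟨i / 2, by omega⟩)

theorem isLeft_alternatingPath {t : ℕ} (e₁ : Fin t → α) (e₂ : Fin (t + 1) → β)
    (i : Fin (2 * t + 1)) : (alternatingPath e₁ e₂ i).isLeft = decide (i.val % 2 = 1) := by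
  unfold alternatingPath; split_ifs with h <;> simp [h]

theorem alternatingPath_injective {t : ℕ} {e₁ : Fin t → α} {e₂ : Fin (t + 1) → β}
    (h₁ : Function.Injective e₁) (h₂ : Function.Injective e₂) :
    Function.Injective (alternatingPath e₁ e₂) := by
  intro i j hij
  unfold alternatingPath at hij
  split_ifs at hij with hi hj hj <;> simp only [Sum.inl.injEq, Sum.inr.injEq] at hij
  · have := Fin.mk.inj_iff.mp (h₁ hij); omega
  · have := Fin.mk.inj_iff.mp (h₂ hij); omega

theorem contains_pathGraph_graphJoin {t : ℕ} (e₁ : Fin t ↪ α) (e₂ : Fin (t + 1) ↪ β) :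
    Contains (graphJoin G H) (pathGraph (2 * t + 1)) := by
  refine ⟨⟨alternatingPath e₁ e₂, alternatingPath_injective e₁.injective e₂.injective⟩,
    fun i j hij => graphJoin_adj_of_isLeft_ne G H ?_⟩
  simp only [Function.Embedding.coeFn_mk, isLeft_alternatingPath, ne_eq, decide_eq_decide]
  rw [pathGraph_adj] at hij
  omega

theorem le_card_of_contains_pathGraph_graphJoin_bot [Fintype α] {k : ℕ}
    (h : Contains (graphJoin G (⊥ : SimpleGraph β)) (pathGraph (2 * k))) :
    k ≤ Fintype.card α := by
  obtain ⟨f, hf⟩ := h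
  have hleft : ∀ i : Fin k, ∃ j : Fin (2 * k), j.val / 2 = i ∧ ∃ a, f j = .inl a := by
    intro i
    have hadj := hf ⟨2 * i, by omega⟩ ⟨2 * i + 1, by omega⟩ (by simp [pathGraph_adj])
    rcases isLeft_or_isLeft_of_graphJoin_bot_adj G hadj with h | h <;>
      exact ⟨_, by simp <;> omega, Sum.isLeft_iff.mp h⟩
  choose j hj a ha using hleft
  have ha_inj : Function.Injective a := fun i i' hii' => by
    have := f.injective ((ha i).trans (hii' ▸ (ha i').symm))
    exact Fin.ext (by rw [← hj i, ← hj i', this])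
  simpa using Fintype.card_le_of_injective a ha_inj

end graphJoin

/-- the join of a clique on `t` vertices with an independent set of size
`m ≥ t + 2` contains a path on `2t+1` vertices but no path on `2t+2` vertices. -/
theorem stmt_0 (t m : ℕ) (hm : t + 2 ≤ m) :
    Contains (cliqueIndepJoin t m) (SimpleGraph.pathGraph (2 * t + 1)) ∧
    ¬ Contains (cliqueIndepJoin t m) (SimpleGraph.pathGraph (2 * t + 2)) := by
  refine ⟨contains_pathGraph_graphJoin _ _ (.refl _) (Fin.castLEEmb (by omega)), fun h => ?_⟩
  rw [show 2 * t + 2 = 2 * (t + 1) by ring] at h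
  simpa using le_card_of_contains_pathGraph_graphJoin_bot _ h
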